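/- arXiv:2404.04646 — 2 statements merged into one kernel-verified Lean document; each statement's English description precedes it below -/
import Mathlib

section
/- Let f_5(x) = C(x,5) - 2·C(x,4), f_4(x) = C(x,4) - 2·C(x,3), f_3(x) = C(x,3) - 2·C(x,2). For every integer n ≥ 13, f_5(n) - (f_5(n-1) + f_4(n-2) + f_3(n-3)) = (n-3)(n-8)/2 ≥ 0. -/
def f7_5 (x : ℕ) : ℤ := (Nat.choose x 5 : ℤ) - 2 * Nat.choose x 4
def f7_4 (x : ℕ) : ℤ := (Nat.choose x 4 : ℤ) - 2 * Nat.choose x 3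
def f7_3 (x : ℕ) : ℤ := (Nat.choose x 3 : ℤ) - 2 * Nat.choose x 2

/-!
Each `f_k(x) = C(x,k) - 2 C(x,k-1)` is a combination of binomial coefficients, so by Pascal's rule
its forward difference is `f_{k-1}`. Hence, with `n = m + 3`, the difference telescopes:
`f_5(m+3) - f_5(m+2) - f_4(m+1) - f_3(m) = f_2(m) = C(m,2) - 2m = m(m-5)/2`, which is `(n-3)(n-8)/2`.
-/

def chooseSubTwice (k x : ℕ) : ℤ := (x.choose (k + 1) : ℤ) - 2 * x.choose k

theorem chooseSubTwice_succ_succ (k x : ℕ) :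
    chooseSubTwice (k + 1) (x + 1) = chooseSubTwice (k + 1) x + chooseSubTwice k x := by
  simp only [chooseSubTwice, Nat.choose_succ_succ' x (k + 1), Nat.choose_succ_succ' x k]
  push_cast
  ring

theorem two_mul_chooseSubTwice_one (x : ℕ) : 2 * chooseSubTwice 1 x = x * ((x : ℤ) - 5) := by
  have h : (2 : ℚ) * x.choose 2 = x * (x - 1) := by
    rw [Nat.cast_choose_two]
    ring
  have h' : (2 : ℤ) * x.choose 2 = x * (x - 1) := by exact_mod_cast h
  simp only [chooseSubTwice, Nat.reduceAdd, Nat.choose_one_right]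
  linear_combination h'

theorem f7_5_sub_telescope (m : ℕ) :
    f7_5 (m + 3) - (f7_5 (m + 2) + f7_4 (m + 1) + f7_3 m) = chooseSubTwice 1 m := by
  have h5 := chooseSubTwice_succ_succ 3 (m + 2)
  have h4 := chooseSubTwice_succ_succ 2 (m + 1)
  have h3 := chooseSubTwice_succ_succ 1 m
  simp only [f7_5, f7_4, f7_3, chooseSubTwice] at *
  linear_combination h5 + h4 + h3

theorem stmt_7 (n : ℕ) (hn : 13 ≤ n) :
    2 * (f7_5 n - (f7_5 (n - 1) + f7_4 (n - 2) + f7_3 (n - 3)))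
      = ((n : ℤ) - 3) * ((n : ℤ) - 8) ∧
    0 ≤ f7_5 n - (f7_5 (n - 1) + f7_4 (n - 2) + f7_3 (n - 3)) := by
  obtain ⟨m, rfl⟩ : ∃ m, n = m + 3 := ⟨n - 3, by omega⟩
  simp only [show m + 3 - 1 = m + 2 by omega, show m + 3 - 2 = m + 1 by omega,
    Nat.add_sub_cancel, f7_5_sub_telescope]
  have h := two_mul_chooseSubTwice_one m
  have hm : (10 : ℤ) ≤ m := by exact_mod_cast (by omega : 10 ≤ m)
  refine ⟨by push_cast; linear_combination h, ?_⟩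
  nlinarith
end

section
/- Let n ≥ 8 be an integer and let α_2, α_3 be nonnegative integers satisfying the following Kruskal–Katona-type condition: either α_2 ≥ C(n,2), or there exists n_2 < n with α_2 = C(n_2,2) and α_3 ≤ C(n_2,3), or there exist 1 ≤ n_1 < n_2 < n with α_2 = C(n_2,2) + C(n_1,1) and α_3 ≤ C(n_2,3) + C(n_1,2). If moreover α_3 ≤ C(n,3), then 3·α_3 - 4·α_2 ≤ 3·C(n,3) - 4·C(n,2) = n(n-1)(n-6)/2. -/
/-!
Pascal's rule gives `kkExcess (m + 1) = kkExcess m + kkStep m`, where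
`2 * kkStep m = m (3m - 11)`; so `kkExcess` is nonpositive up to `6` and increasing from `4`
on, hence `kkExcess m ≤ kkExcess n` for `m ≤ n` once `n ≥ 6`. The first two Kruskal–Katona
alternatives reduce to this at once. In the third, `3 α₃ - 4 α₂ ≤ kkExcess n₂ + kkStep n₁`,
and either `kkStep n₁ ≤ 0` or `kkStep n₁ ≤ kkStep n₂`, bounding it by `kkExcess n₂` or
`kkExcess (n₂ + 1)`, both at most `kkExcess n`.
-/

def kkExcess (m : ℕ) : ℤ := 3 * (m.choose 3 : ℤ) - 4 * m.choose 2

def kkStep (m : ℕ) : ℤ := 3 * (m.choose 2 : ℤ) - 4 * m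

lemma two_mul_choose_two_cast (m : ℕ) : 2 * (m.choose 2 : ℤ) = m * (m - 1) := by
  have := Nat.cast_choose_two ℚ m
  qify; rw [this]; ring

lemma kkExcess_succ (m : ℕ) : kkExcess (m + 1) = kkExcess m + kkStep m := by
  simp only [kkExcess, kkStep, Nat.choose_succ_succ, Nat.choose_one_right]
  push_cast; ring

lemma kkStep_nonpos {m : ℕ} (hm : m ≤ 3) : kkStep m ≤ 0 := by
  interval_cases m <;> decide

lemma kkStep_le_kkStep {a b : ℕ} (hb : 2 ≤ b) (hba : b ≤ a) : kkStep b ≤ kkStep a := by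
  have hb' := two_mul_choose_two_cast b
  have ha' := two_mul_choose_two_cast a
  have : (b : ℤ) ≤ a := by exact_mod_cast hba
  have : (2 : ℤ) ≤ b := by exact_mod_cast hb
  simp only [kkStep]
  nlinarith

lemma kkStep_nonneg {m : ℕ} (hm : 4 ≤ m) : 0 ≤ kkStep m :=
  le_trans (by decide) (kkStep_le_kkStep (by norm_num) hm)

lemma kkExcess_nonpos {m : ℕ} (hm : m ≤ 6) : kkExcess m ≤ 0 := by
  interval_cases m <;> decide

lemma kkExcess_monotoneOn : MonotoneOn kkExcess (Set.Ici 4) :=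
  monotoneOn_nat_Ici_of_le_succ fun m hm => by
    rw [kkExcess_succ]; linarith [kkStep_nonneg hm]

lemma kkExcess_le_of_le {m n : ℕ} (hmn : m ≤ n) (hn : 6 ≤ n) : kkExcess m ≤ kkExcess n := by
  rcases le_total m 6 with hm | hm
  · calc kkExcess m ≤ 0 := kkExcess_nonpos hm
      _ = kkExcess 6 := by decide
      _ ≤ kkExcess n := kkExcess_monotoneOn (by simp) (by simp; omega) hn
  · exact kkExcess_monotoneOn (by simp; omega) (by simp; omega) hmn

lemma kkExcess_add_kkStep_le {a b n : ℕ} (hba : b ≤ a) (han : a < n) (hn : 6 ≤ n) :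
    kkExcess a + kkStep b ≤ kkExcess n := by
  rcases le_or_gt b 3 with hb | hb
  · linarith [kkStep_nonpos hb, kkExcess_le_of_le han.le hn]
  · calc kkExcess a + kkStep b ≤ kkExcess a + kkStep a := by
          gcongr; exact kkStep_le_kkStep (by omega) hba
      _ = kkExcess (a + 1) := (kkExcess_succ a).symm
      _ ≤ kkExcess n := kkExcess_le_of_le han hn

lemma two_mul_kkExcess (n : ℕ) : 2 * kkExcess n = n * (n - 1) * (n - 6) := by
  induction n with
  | zero => decide
  | succ m ih =>
    have hstep : 2 * kkStep m = m * (3 * m - 11) := by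
      simp only [kkStep]; linear_combination 3 * two_mul_choose_two_cast m
    rw [kkExcess_succ]; push_cast; linear_combination ih + hstep

theorem stmt_10_general (n : ℕ) (hn : 8 ≤ n) (α₂ α₃ : ℤ)
    (hKK : (Nat.choose n 2 : ℤ) ≤ α₂ ∨
      (∃ n₂ : ℕ, n₂ < n ∧ α₂ = Nat.choose n₂ 2 ∧ α₃ ≤ Nat.choose n₂ 3) ∨
      (∃ n₁ n₂ : ℕ, 1 ≤ n₁ ∧ n₁ < n₂ ∧ n₂ < n ∧
        α₂ = Nat.choose n₂ 2 + Nat.choose n₁ 1 ∧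
        α₃ ≤ Nat.choose n₂ 3 + Nat.choose n₁ 2))
    (h3 : α₃ ≤ Nat.choose n 3) :
    3 * α₃ - 4 * α₂ ≤ 3 * Nat.choose n 3 - 4 * Nat.choose n 2 ∧
    2 * (3 * (Nat.choose n 3 : ℤ) - 4 * Nat.choose n 2)
      = (n : ℤ) * ((n : ℤ) - 1) * ((n : ℤ) - 6) := by
  have hn6 : 6 ≤ n := by omega
  refine ⟨?_, two_mul_kkExcess n⟩
  rcases hKK with hα₂ | ⟨n₂, hn₂, rfl, hα₃⟩ | ⟨n₁, n₂, -, hn₁₂, hn₂, rfl, hα₃⟩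
  · linarith
  · have := kkExcess_le_of_le hn₂.le hn6
    simp only [kkExcess] at this
    linarith
  · have := kkExcess_add_kkStep_le hn₁₂.le hn₂ hn6
    simp only [kkExcess, kkStep, Nat.choose_one_right] at this ⊢
    linarith

theorem stmt_10 (n : ℕ) (hn : 8 ≤ n) (α₂ α₃ : ℤ) (hα₂ : 0 ≤ α₂) (hα₃ : 0 ≤ α₃)
    (hKK : (Nat.choose n 2 : ℤ) ≤ α₂ ∨
      (∃ n₂ : ℕ, n₂ < n ∧ α₂ = Nat.choose n₂ 2 ∧ α₃ ≤ Nat.choose n₂ 3) ∨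
      (∃ n₁ n₂ : ℕ, 1 ≤ n₁ ∧ n₁ < n₂ ∧ n₂ < n ∧
        α₂ = Nat.choose n₂ 2 + Nat.choose n₁ 1 ∧
        α₃ ≤ Nat.choose n₂ 3 + Nat.choose n₁ 2))
    (h3 : α₃ ≤ Nat.choose n 3) :
    3 * α₃ - 4 * α₂ ≤ 3 * Nat.choose n 3 - 4 * Nat.choose n 2 ∧
    2 * (3 * (Nat.choose n 3 : ℤ) - 4 * Nat.choose n 2)
      = (n : ℤ) * ((n : ℤ) - 1) * ((n : ℤ) - 6) :=
  stmt_10_general n hn α₂ α₃ hKK h3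
end
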